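/- arXiv:2403.09372 — 5 statements merged into one kernel-verified Lean document; each statement's English description precedes it below -/
import Mathlib

section
/- The general commutation relation D_ν^n ∘ D_μ^m = D_{μ+n}^m ∘ D_{ν-m}^n holds for all ν, μ ∈ ℝ and m, n ∈ ℕ, as operators on (m+n)-times differentiable functions on (0,∞). -/
/-!
Expanding twice gives `D_a D_b f = f'' + ((a + b)/r) f' + (b (a - 1)/r²) f`. The coefficients
`a + b` and `b (a - 1)` are unchanged under `(a, b) ↦ (b + 1, a - 1)`, so
`D_a D_b = D_{b+1} D_{a-1}`. Moving one factor `D_ν` past `D_μ^m` with this swap shifts it to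
`D_{ν-m}` and each factor of `D_μ^m` up by one; doing so for each of the `n` factors of `D_ν^n`
gives the commutation relation.
-/

/-- The Bessel operator `D_κ f (r) = f'(r) + (κ/r) f(r)`. -/
noncomputable def besselD (κ : ℝ) (f : ℝ → ℂ) : ℝ → ℂ :=
  fun r => deriv f r + ((κ / r : ℝ) : ℂ) * f r

/-- The iterated Bessel operator `D_κ^n = D_{κ-(n-1)} ∘ ⋯ ∘ D_{κ-1} ∘ D_κ`. -/
noncomputable def besselDIter (κ : ℝ) : ℕ → (ℝ → ℂ) → (ℝ → ℂ)
  | 0, f => f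
  | n + 1, f => besselD (κ - n) (besselDIter κ n f)

open Set Topology

lemma hasDerivAt_ofReal_const_div {r : ℝ} (b : ℝ) (hr : r ≠ 0) :
    HasDerivAt (fun x : ℝ => ((b / x : ℝ) : ℂ)) ((-(b / r ^ 2) : ℝ) : ℂ) r := by
  have h : HasDerivAt (fun x : ℝ => b * x⁻¹) (b * -(r ^ 2)⁻¹) r :=
    (hasDerivAt_inv hr).const_mul b
  simpa only [div_eq_mul_inv, mul_neg] using h.ofReal_comp

lemma contDiffOn_ofReal_const_div (b : ℝ) (k : ℕ) :
    ContDiffOn ℝ k (fun x : ℝ => ((b / x : ℝ) : ℂ)) (Ioi 0) :=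
  Complex.ofRealCLM.contDiff.comp_contDiffOn
    (contDiffOn_const.div contDiffOn_id fun _ hx => ne_of_gt hx)

lemma contDiffOn_besselD {f : ℝ → ℂ} {k : ℕ} (κ : ℝ) (hf : ContDiffOn ℝ (k + 1) f (Ioi 0)) :
    ContDiffOn ℝ k (besselD κ f) (Ioi 0) :=
  (hf.deriv_of_isOpen isOpen_Ioi le_rfl).add
    ((contDiffOn_ofReal_const_div κ k).mul (hf.of_le (by norm_cast; omega)))

lemma contDiffOn_besselDIter {f : ℝ → ℂ} {k : ℕ} (κ : ℝ) (n : ℕ)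
    (hf : ContDiffOn ℝ (k + n) f (Ioi 0)) :
    ContDiffOn ℝ k (besselDIter κ n f) (Ioi 0) := by
  induction n generalizing k with
  | zero => simpa [besselDIter] using hf
  | succ n ih =>
    have hk : ((k : WithTop ℕ∞) + ↑(n + 1)) = ↑(k + 1) + n := by push_cast; ring
    exact contDiffOn_besselD _ (ih (hk ▸ hf))

lemma Set.EqOn.besselD {s : Set ℝ} {g h : ℝ → ℂ} (hgh : EqOn g h s) (hs : IsOpen s) (κ : ℝ) :
    EqOn (besselD κ g) (besselD κ h) s := fun r hr =>
  congr_arg₂ (· + ((κ / r : ℝ) : ℂ) * ·) (hgh.deriv hs hr) (hgh hr)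

lemma Set.EqOn.besselDIter {s : Set ℝ} {g h : ℝ → ℂ} (hgh : EqOn g h s) (hs : IsOpen s)
    (κ : ℝ) (n : ℕ) :
    EqOn (besselDIter κ n g) (besselDIter κ n h) s := by
  induction n with
  | zero => exact hgh
  | succ n ih => exact ih.besselD hs _

lemma besselDIter_succ' (κ : ℝ) (n : ℕ) (f : ℝ → ℂ) :
    besselDIter κ (n + 1) f = besselDIter (κ - 1) n (besselD κ f) := by
  induction n with
  | zero => simp [besselDIter]
  | succ n ih =>
    change besselD (κ - (n + 1 : ℕ)) (besselDIter κ (n + 1) f)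
      = besselD (κ - 1 - n) (besselDIter (κ - 1) n (besselD κ f))
    rw [ih]
    push_cast
    ring_nf

lemma besselD_besselD_apply {f : ℝ → ℂ} {r : ℝ} (a b : ℝ) (hf : DifferentiableAt ℝ f r)
    (hf' : DifferentiableAt ℝ (deriv f) r) (hr : r ≠ 0) :
    besselD a (besselD b f) r = deriv (deriv f) r + (((a + b) / r : ℝ) : ℂ) * deriv f r
      + ((b * (a - 1) / r ^ 2 : ℝ) : ℂ) * f r := by
  have hD : HasDerivAt (besselD b f)
      (deriv (deriv f) r + (((-(b / r ^ 2) : ℝ) : ℂ) * f r + ((b / r : ℝ) : ℂ) * deriv f r)) r :=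
    hf'.hasDerivAt.add ((hasDerivAt_ofReal_const_div b hr).mul hf.hasDerivAt)
  simp only [besselD, hD.deriv]
  have hrC : (r : ℂ) ≠ 0 := by exact_mod_cast hr
  push_cast
  field_simp
  ring

lemma besselD_besselD_swap {f : ℝ → ℂ} (hf : ContDiffOn ℝ 2 f (Ioi 0)) (a b : ℝ) :
    EqOn (besselD a (besselD b f)) (besselD (b + 1) (besselD (a - 1) f)) (Ioi 0) := by
  intro r hr
  have hnhds : Ioi (0 : ℝ) ∈ 𝓝 r := isOpen_Ioi.mem_nhds hr
  have hf₁ : DifferentiableAt ℝ f r :=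
    (hf.differentiableOn two_ne_zero r hr).differentiableAt hnhds
  have hf₂ : DifferentiableAt ℝ (deriv f) r :=
    ((hf.deriv_of_isOpen isOpen_Ioi (m := 1) (by norm_num)).differentiableOn one_ne_zero r
      hr).differentiableAt hnhds
  rw [besselD_besselD_apply a b hf₁ hf₂ hr.ne',
    besselD_besselD_apply (b + 1) (a - 1) hf₁ hf₂ hr.ne']
  ring_nf

lemma besselD_besselDIter (ν μ : ℝ) (m : ℕ) {f : ℝ → ℂ}
    (hf : ContDiffOn ℝ (m + 1) f (Ioi 0)) :
    EqOn (besselD ν (besselDIter μ m f)) (besselDIter (μ + 1) m (besselD (ν - m) f)) (Ioi 0) := by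
  induction m generalizing ν μ f with
  | zero => intro r _; simp [besselDIter]
  | succ m ih =>
    have hf₂ : ContDiffOn ℝ 2 f (Ioi 0) := hf.of_le (by norm_cast; omega)
    have hswap := (besselD_besselD_swap hf₂ (ν - m) μ).besselDIter isOpen_Ioi (μ - 1 + 1) m
    intro r hr
    rw [besselDIter_succ', ih ν (μ - 1) (contDiffOn_besselD μ hf) hr, hswap hr,
      besselDIter_succ', sub_add_cancel, add_sub_cancel_right, Nat.cast_succ, sub_sub]

theorem bessel_commutation_general (ν μ : ℝ) (m n : ℕ) (f : ℝ → ℂ)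
    (hf : ContDiffOn ℝ (m + n) f (Set.Ioi 0)) :
    ∀ r ∈ Set.Ioi (0 : ℝ),
      besselDIter ν n (besselDIter μ m f) r
        = besselDIter (μ + n) m (besselDIter (ν - m) n f) r := by
  induction n generalizing ν with
  | zero => simp [besselDIter]
  | succ n ih =>
    have hmn : ContDiffOn ℝ (m + n) f (Ioi 0) := hf.of_le (by norm_cast; omega)
    have hm : ContDiffOn ℝ (m + 1) (besselDIter (ν - m) n f) (Ioi 0) := by
      refine contDiffOn_besselDIter _ n (hf.of_le (le_of_eq ?_))
      push_cast; ring
    intro r hr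
    change besselD (ν - n) (besselDIter ν n (besselDIter μ m f)) r
      = besselDIter (μ + (n + 1 : ℕ)) m (besselD (ν - m - n) (besselDIter (ν - m) n f)) r
    rw [EqOn.besselD (ih ν hmn) isOpen_Ioi _ hr, besselD_besselDIter _ _ m hm hr]
    push_cast
    ring_nf
end

section
/- For every s ∈ ℝ, and every 0 ≤ i ≤ n, the mixed iterated Bessel derivative of f₀(r) = (1+r²)^{s/2} satisfies D_i^{n−i} D_0^i f₀(r) = Σ_{ℓ=i}^{n} C(n−i, ℓ−i) · ∏_{j=0}^{n−ℓ−1} 2(i−j) · ∏_{j=0}^{ℓ−1}(s−2j) · r^{2ℓ−n} (1+r²)^{s/2−ℓ}, where C denotes binomial coefficients; in particular each such derivative extends continuously to [0,∞). -/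
/-!
With `w a b (r) = r^a (1+r²)^b`, the Bessel operator acts on these terms by
`D_κ w a b = (a+κ) w (a-1) b + 2b w (a+1) (b-1)` for `r > 0`. Along `D_κ^m`, a term reached by
`k` steps of the second kind and `l` of the first is multiplied at the next step by `a+κ-2l` or by
`2(b-k)`, each depending on one count only, so Pascal's rule gives a binomial expansion of
`D_κ^m w a b`. For `D_0^i (1+r²)^{s/2}` every first-kind step carries the factor `0` at `l = 0`, so
a single term survives; applying the expansion to it gives the formula. A negative power
`r^{2ℓ-n}` occurs only with `n - ℓ > i`, where `∏_{j<n-ℓ} 2(i-j)` vanishes, so the sum is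
continuous on `[0,∞)`.
-/

open Finset Set

noncomputable def weightTerm (a : ℤ) (b : ℝ) (r : ℝ) : ℂ :=
  (r : ℂ) ^ a * (((1 + r ^ 2) ^ b : ℝ) : ℂ)

theorem weightTerm_zero_left (b : ℝ) :
    weightTerm 0 b = fun r => (((1 + r ^ 2) ^ b : ℝ) : ℂ) := by
  ext r; simp [weightTerm]

theorem hasDerivAt_weightTerm (a : ℤ) (b : ℝ) {r : ℝ} (hr : 0 < r) :
    HasDerivAt (weightTerm a b)
      (a * weightTerm (a - 1) b r + 2 * b * weightTerm (a + 1) (b - 1) r) r := by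
  have hr0 : (r : ℂ) ≠ 0 := by exact_mod_cast hr.ne'
  have hpow : HasDerivAt (fun x : ℝ => (x : ℂ) ^ a) (a * (r : ℂ) ^ (a - 1)) r :=
    (hasDerivAt_zpow a (r : ℂ) (Or.inl hr0)).comp_ofReal
  have hweight : HasDerivAt (fun x : ℝ => (((1 + x ^ 2) ^ b : ℝ) : ℂ))
      ((2 * r * b * (1 + r ^ 2) ^ (b - 1) : ℝ) : ℂ) r := by
    have hbase : HasDerivAt (fun x : ℝ => 1 + x ^ 2) (2 * r) r := by
      simpa using (hasDerivAt_pow 2 r).const_add 1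
    exact (hbase.rpow_const (Or.inl (by positivity))).ofReal_comp
  refine (hpow.mul hweight).congr_deriv ?_
  simp only [weightTerm, zpow_add_one₀ hr0, zpow_sub_one₀ hr0]
  push_cast
  field_simp

theorem weightTerm_sub_one {a : ℤ} (b : ℝ) {r : ℝ} (hr : 0 < r) :
    weightTerm (a - 1) b r = weightTerm a b r / r := by
  simp only [weightTerm, zpow_sub_one₀ (Complex.ofReal_ne_zero.2 hr.ne')]
  ring

theorem besselD_eqOn_sum_weightTerm {ι : Type*} (κ : ℝ) (S : Finset ι) (c : ι → ℂ)
    (a : ι → ℤ) (b : ι → ℝ) {f : ℝ → ℂ}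
    (hf : EqOn f (fun r => ∑ k ∈ S, c k * weightTerm (a k) (b k) r) (Ioi 0)) :
    EqOn (besselD κ f)
      (fun r => ∑ k ∈ S, c k * ((a k + κ) * weightTerm (a k - 1) (b k) r
        + 2 * b k * weightTerm (a k + 1) (b k - 1) r)) (Ioi 0) := by
  intro r (hr : 0 < r)
  have hderiv : deriv f r = ∑ k ∈ S, c k * (a k * weightTerm (a k - 1) (b k) r
      + 2 * b k * weightTerm (a k + 1) (b k - 1) r) := by
    rw [(Filter.eventuallyEq_of_mem (Ioi_mem_nhds hr) hf).deriv_eq]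
    exact (HasDerivAt.fun_sum fun k _ =>
      (hasDerivAt_weightTerm (a k) (b k) hr).const_mul (c k)).deriv
  simp only [besselD, hderiv, hf hr, mul_sum, ← sum_add_distrib]
  refine sum_congr rfl fun k _ => ?_
  rw [weightTerm_sub_one (b k) hr]
  push_cast
  ring

theorem besselDIter_eqOn_weightTerm (κ : ℝ) (a : ℤ) (b : ℝ) (c : ℂ) {f : ℝ → ℂ}
    (hf : EqOn f (fun r => c * weightTerm a b r) (Ioi 0)) (m : ℕ) :
    EqOn (besselDIter κ m f)
      (fun r => c * ∑ kl ∈ antidiagonal m, (m.choose kl.1 : ℂ)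
        * (∏ j ∈ range kl.1, 2 * ((b : ℂ) - j)) * (∏ j ∈ range kl.2, ((a : ℂ) + κ - 2 * j))
        * weightTerm (a - kl.2 + kl.1) (b - kl.1) r) (Ioi 0) := by
  induction m with
  | zero => simpa [besselDIter] using hf
  | succ m ih =>
    have hstep := besselD_eqOn_sum_weightTerm (κ - m) (antidiagonal m)
      (fun kl => c * (m.choose kl.1 : ℂ) * (∏ j ∈ range kl.1, 2 * ((b : ℂ) - j))
        * (∏ j ∈ range kl.2, ((a : ℂ) + κ - 2 * j)))
      (fun kl => a - kl.2 + kl.1) (fun kl => b - kl.1)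
      (f := besselDIter κ m f) (fun r hr => by simp only [ih hr, mul_sum, mul_assoc])
    intro r hr
    rw [besselDIter, hstep hr]
    have hpascal := sum_antidiagonal_choose_succ_mul (fun k l => (∏ j ∈ range k, 2 * ((b : ℂ) - j))
      * (∏ j ∈ range l, ((a : ℂ) + κ - 2 * j)) * weightTerm (a - l + k) (b - k) r) m
    simp only [← mul_assoc] at hpascal
    simp only [hpascal, mul_add, mul_sum, ← sum_add_distrib]
    refine sum_congr rfl fun kl hkl => ?_
    obtain ⟨k, l⟩ := kl
    rw [Finset.HasAntidiagonal.mem_antidiagonal] at hkl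
    subst hkl
    rw [Nat.choose_symm_add, prod_range_succ, prod_range_succ]
    push_cast
    ring_nf

theorem besselDIter_zero_eqOn (s : ℝ) (i : ℕ) :
    EqOn (besselDIter 0 i (weightTerm 0 (s / 2)))
      (fun r => (∏ j ∈ range i, ((s : ℂ) - 2 * j)) * weightTerm i (s / 2 - i) r) (Ioi 0) := by
  intro r hr
  rw [besselDIter_eqOn_weightTerm 0 0 (s / 2) 1 (fun r _ => (one_mul _).symm) i hr]
  dsimp only
  rw [one_mul, sum_eq_single (i, 0)]
  · simp only [Nat.choose_self, prod_range_zero]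
    push_cast
    rw [zero_add, prod_congr rfl fun (j : ℕ) _ => show 2 * ((s : ℂ) / 2 - j) = s - 2 * j by ring]
    ring
  · rintro ⟨k, l⟩ hkl hne
    have hl : 0 < l := by
      rw [Finset.HasAntidiagonal.mem_antidiagonal] at hkl
      grind
    rw [prod_eq_zero (mem_range.2 hl) (by simp), mul_zero, zero_mul]
  · simp

noncomputable def mixedCoeff (s : ℝ) (i n ℓ : ℕ) : ℂ :=
  ((n - i).choose (ℓ - i) : ℂ) * (∏ j ∈ range (n - ℓ), 2 * ((i : ℂ) - j))
    * ∏ j ∈ range ℓ, ((s : ℂ) - 2 * j)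

theorem mixedCoeff_eq_zero (s : ℝ) {i n ℓ : ℕ} (hiℓ : i ≤ ℓ) (hℓn : 2 * ℓ < n) :
    mixedCoeff s i n ℓ = 0 := by
  rw [mixedCoeff, prod_eq_zero (mem_range.2 (show i < n - ℓ by omega)) (by simp)]
  ring

theorem besselDIter_mixed_eqOn (s : ℝ) {i n : ℕ} (hin : i ≤ n) :
    EqOn (besselDIter i (n - i) (besselDIter 0 i (weightTerm 0 (s / 2))))
      (fun r => ∑ ℓ ∈ Icc i n, mixedCoeff s i n ℓ * weightTerm (2 * ℓ - n) (s / 2 - ℓ) r)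
      (Ioi 0) := by
  intro r hr
  rw [besselDIter_eqOn_weightTerm i i (s / 2 - i) _ (besselDIter_zero_eqOn s i) (n - i) hr]
  dsimp only
  rw [Nat.sum_antidiagonal_eq_sum_range_succ_mk, mul_sum, ← Finset.Ico_add_one_right_eq_Icc,
    sum_Ico_eq_sum_range, show n + 1 - i = n - i + 1 by omega]
  refine sum_congr rfl fun k hk => ?_
  have hk : k ≤ n - i := Nat.lt_succ_iff.1 (mem_range.1 hk)
  have hexp : (i : ℤ) - (n - i - k : ℕ) + k = 2 * (i + k : ℕ) - n := by omega
  have hwt : s / 2 - i - k = s / 2 - (i + k : ℕ) := by push_cast; ring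
  have hQ : ∀ j ∈ range k, 2 * (((s / 2 - i : ℝ) : ℂ) - j) = s - 2 * (i + j : ℕ) := by
    intro j _; push_cast; ring
  have hP : ∀ j ∈ range (n - i - k), ((i : ℤ) : ℂ) + (i : ℝ) - 2 * j = 2 * ((i : ℂ) - j) := by
    intro j _; push_cast; ring
  dsimp only
  rw [mixedCoeff, show i + k - i = k by omega, show n - (i + k) = n - i - k by omega,
    prod_range_add, hexp, hwt, prod_congr rfl hQ, prod_congr rfl hP]
  ring

theorem exists_continuous_eqOn_sum_mixedCoeff (s : ℝ) (i n : ℕ) :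
    ∃ g : ℝ → ℂ, Continuous g ∧ EqOn g
      (fun r => ∑ ℓ ∈ Icc i n, mixedCoeff s i n ℓ * weightTerm (2 * ℓ - n) (s / 2 - ℓ) r)
      (Ioi 0) := by
  refine ⟨fun r => ∑ ℓ ∈ Icc i n, mixedCoeff s i n ℓ * ((r : ℂ) ^ (2 * ℓ - n)
    * (((1 + r ^ 2) ^ (s / 2 - ℓ) : ℝ) : ℂ)), ?_, fun r hr => sum_congr rfl fun ℓ hℓ => ?_⟩
  · refine continuous_finsetSum _ fun ℓ _ => ?_
    have hweight : Continuous fun r : ℝ => (1 + r ^ 2) ^ (s / 2 - ℓ) :=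
      (by fun_prop : Continuous fun r : ℝ => 1 + r ^ 2).rpow_const fun r => Or.inl (by positivity)
    fun_prop
  · rw [weightTerm]
    obtain ⟨hiℓ, -⟩ := mem_Icc.1 hℓ
    rcases le_or_gt n (2 * ℓ) with hnℓ | hℓn
    · rw [← zpow_natCast, Nat.cast_sub hnℓ]
      push_cast
      rfl
    · rw [mixedCoeff_eq_zero s hiℓ hℓn, zero_mul, zero_mul]

/-- Mixed iterated Bessel derivatives of `f₀(r) = (1+r²)^{s/2}`: explicit sum formula,
and continuous extension to `[0,∞)`. -/
theorem bessel_sobolev_weight (s : ℝ) (i n : ℕ) (hin : i ≤ n) :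
    (∀ r > (0 : ℝ),
        besselDIter (i : ℝ) (n - i)
            (besselDIter 0 i (fun t : ℝ => (((1 + t ^ 2) ^ (s / 2) : ℝ) : ℂ))) r
          = ∑ ℓ ∈ Finset.Icc i n,
              (Nat.choose (n - i) (ℓ - i) : ℂ)
                * (∏ j ∈ Finset.range (n - ℓ), (2 * ((i : ℂ) - (j : ℂ))))
                * (∏ j ∈ Finset.range ℓ, ((s : ℂ) - 2 * (j : ℂ)))
                * (r : ℂ) ^ ((2 * ℓ : ℤ) - (n : ℤ))
                * (((1 + r ^ 2) ^ (s / 2 - ℓ) : ℝ) : ℂ))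
    ∧ ∃ g : ℝ → ℂ, ContinuousOn g (Set.Ici 0) ∧
        ∀ r > (0 : ℝ), g r =
          besselDIter (i : ℝ) (n - i)
            (besselDIter 0 i (fun t : ℝ => (((1 + t ^ 2) ^ (s / 2) : ℝ) : ℂ))) r := by
  rw [← weightTerm_zero_left]
  have formula := besselDIter_mixed_eqOn s hin
  obtain ⟨g, hg, hgf⟩ := exists_continuous_eqOn_sum_mixedCoeff s i n
  refine ⟨fun r hr => ?_, g, hg.continuousOn, fun r hr => (hgf hr).trans (formula hr).symm⟩
  rw [formula hr]
  simp only [mixedCoeff, weightTerm, mul_assoc]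
end

section
/- Rescaled modified Struve function bound: for k ∈ ℕ with k ≥ 1 and all s > 0, define M_k(s) := s^k ∫₀^{π/2} e^{−s cos θ} sin^{2k}(θ) dθ; then 0 ≤ M_k(s) ≤ s^{k−1}, i.e. s^k ∫₀^{π/2} e^{−s cos θ} sin^{2k}(θ) dθ ≤ s^{k−1}. -/
open Real intervalIntegral

lemma struve_integral_sin (s : ℝ) (hs : 0 < s) :
    (∫ θ in (0:ℝ)..(Real.pi/2), Real.exp (-s * Real.cos θ) * Real.sin θ)
      = (1 - Real.exp (-s)) / s := by
  have hderiv : ∀ θ ∈ Set.uIcc (0:ℝ) (Real.pi/2),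
      HasDerivAt (fun θ => Real.exp (-s * Real.cos θ) / s)
        (Real.exp (-s * Real.cos θ) * Real.sin θ) θ := by
    intro θ _
    have h1 : HasDerivAt (fun θ : ℝ => -s * Real.cos θ) (-s * (-Real.sin θ)) θ :=
      (Real.hasDerivAt_cos θ).const_mul (-s)
    have h2 : HasDerivAt (fun θ : ℝ => Real.exp (-s * Real.cos θ))
        (Real.exp (-s * Real.cos θ) * (-s * (-Real.sin θ))) θ := h1.exp
    have h3 := h2.div_const s
    refine h3.congr_deriv ?_
    rw [div_eq_iff hs.ne']
    ring
  have hint : IntervalIntegrable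
      (fun θ => Real.exp (-s * Real.cos θ) * Real.sin θ) MeasureTheory.volume 0 (Real.pi/2) :=
    (Continuous.intervalIntegrable (by continuity) _ _)
  have := intervalIntegral.integral_eq_sub_of_hasDerivAt hderiv hint
  rw [this]
  simp [Real.cos_pi_div_two]
  ring

/-- Bound for the rescaled modified Struve function
`M_k(s) = s^k ∫₀^{π/2} e^{−s cos θ} sin^{2k} θ dθ`: for `k ≥ 1` and `s > 0`,
`0 ≤ M_k(s) ≤ s^{k−1}`. -/
theorem struve_bound (k : ℕ) (hk : 1 ≤ k) (s : ℝ) (hs : 0 < s) :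
    0 ≤ s ^ k * ∫ θ in (0 : ℝ)..(Real.pi / 2),
          Real.exp (-s * Real.cos θ) * Real.sin θ ^ (2 * k)
    ∧ s ^ k * ∫ θ in (0 : ℝ)..(Real.pi / 2),
          Real.exp (-s * Real.cos θ) * Real.sin θ ^ (2 * k) ≤ s ^ (k - 1) := by
  have hpi : (0:ℝ) ≤ Real.pi / 2 := by positivity
  have hintk : IntervalIntegrable
      (fun θ => Real.exp (-s * Real.cos θ) * Real.sin θ ^ (2*k))
      MeasureTheory.volume 0 (Real.pi/2) :=
    (Continuous.intervalIntegrable (by continuity) _ _)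
  have hint1 : IntervalIntegrable
      (fun θ => Real.exp (-s * Real.cos θ) * Real.sin θ)
      MeasureTheory.volume 0 (Real.pi/2) :=
    (Continuous.intervalIntegrable (by continuity) _ _)
  have hnn : 0 ≤ ∫ θ in (0:ℝ)..(Real.pi/2),
      Real.exp (-s * Real.cos θ) * Real.sin θ ^ (2*k) := by
    apply intervalIntegral.integral_nonneg hpi
    intro θ hθ
    have := Real.sin_nonneg_of_mem_Icc
      (Set.mem_Icc.mpr ⟨hθ.1, le_trans hθ.2 (by linarith [Real.pi_le_four])⟩)
    positivity
  constructor
  · positivity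
  · have hmono : (∫ θ in (0:ℝ)..(Real.pi/2),
        Real.exp (-s * Real.cos θ) * Real.sin θ ^ (2*k))
        ≤ ∫ θ in (0:ℝ)..(Real.pi/2), Real.exp (-s * Real.cos θ) * Real.sin θ := by
      apply intervalIntegral.integral_mono_on hpi hintk hint1
      intro θ hθ
      have hsin0 : 0 ≤ Real.sin θ := Real.sin_nonneg_of_nonneg_of_le_pi hθ.1
        (le_trans hθ.2 (by linarith [Real.pi_nonneg]))
      have hsin1 : Real.sin θ ≤ 1 := Real.sin_le_one θ
      have : Real.sin θ ^ (2*k) ≤ Real.sin θ ^ 1 :=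
        pow_le_pow_of_le_one hsin0 hsin1 (by omega)
      simp only [pow_one] at this
      exact mul_le_mul_of_nonneg_left this (Real.exp_nonneg _)
    have hval := struve_integral_sin s hs
    have hupper : (∫ θ in (0:ℝ)..(Real.pi/2),
        Real.exp (-s * Real.cos θ) * Real.sin θ ^ (2*k)) ≤ (1 - Real.exp (-s)) / s := by
      rw [← hval]; exact hmono
    have hsk : s ^ k = s ^ (k-1) * s := by
      rw [← pow_succ]
      congr 1
      omega
    calc s ^ k * ∫ θ in (0:ℝ)..(Real.pi/2),
          Real.exp (-s * Real.cos θ) * Real.sin θ ^ (2*k)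
        ≤ s ^ k * ((1 - Real.exp (-s)) / s) := by
          apply mul_le_mul_of_nonneg_left hupper (by positivity)
      _ = s ^ (k-1) * (1 - Real.exp (-s)) := by
          rw [hsk]; field_simp
      _ ≤ s ^ (k-1) * 1 := by
          apply mul_le_mul_of_nonneg_left _ (by positivity)
          have := Real.exp_nonneg (-s)
          linarith
      _ = s ^ (k-1) := mul_one _
end

section
/- Monotonicity of weighted Struve-type functions: for k ≥ 1, the function s ↦ s^{−k} M_k(s) = ∫₀^{π/2} e^{−s cos θ} sin^{2k}(θ) dθ is monotone decreasing on (0,∞), and s ↦ s^k M_k(s) = s^{2k} ∫₀^{π/2} e^{−s cos θ} sin^{2k}(θ) dθ is monotone increasing on (0,∞). -/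
/-!
The first claim holds pointwise: `cos θ ≥ 0` on `[0, π/2]`, so every integrand decreases in `s`.
For the second, substituting `u = s cos θ` turns `s^{2k} ∫₀^{π/2} e^{−s cos θ} sin^{2k} θ dθ`
into `∫₀^s e^{−u} (s² − u²)^{k − 1/2} du`, whose integrand grows with `s` and whose range of
integration grows with `s`.
-/

open Real Set intervalIntegral

lemma sq_rpow_natCast_div_two {x : ℝ} (hx : 0 ≤ x) (m : ℕ) : (x ^ 2) ^ ((m : ℝ) / 2) = x ^ m := by
  rw [← rpow_natCast_mul hx, Nat.cast_two, mul_div_cancel₀ _ two_ne_zero, rpow_natCast]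

lemma antitone_integral_exp_neg_mul_cos_mul_sin_pow (n : ℕ) :
    Antitone fun s : ℝ => ∫ θ in (0 : ℝ)..(π / 2), exp (-s * cos θ) * sin θ ^ n := by
  intro a b hab
  refine integral_mono_on (by positivity) (by apply Continuous.intervalIntegrable; fun_prop)
    (by apply Continuous.intervalIntegrable; fun_prop) fun θ hθ => ?_
  have hcos : 0 ≤ cos θ := cos_nonneg_of_mem_Icc ⟨by linarith [hθ.1, pi_pos], hθ.2⟩
  have hsin : 0 ≤ sin θ := sin_nonneg_of_nonneg_of_le_pi hθ.1 (by linarith [hθ.2, pi_pos])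
  gcongr

lemma pow_succ_mul_integral_comp_mul_cos_mul_sin_pow {f : ℝ → ℝ} (hf : Continuous f) (m : ℕ)
    {s : ℝ} (hs : 0 ≤ s) :
    s ^ (m + 1) * ∫ θ in (0 : ℝ)..(π / 2), f (s * cos θ) * sin θ ^ (m + 1)
      = ∫ u in (0 : ℝ)..s, f u * (s ^ 2 - u ^ 2) ^ ((m : ℝ) / 2) := by
  have hsubst := integral_comp_mul_deriv (a := 0) (b := π / 2) (f := fun θ => s * cos θ)
    (f' := fun θ => -(s * sin θ)) (g := fun u => f u * (s ^ 2 - u ^ 2) ^ ((m : ℝ) / 2))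
    (fun θ _ => by simpa using (hasDerivAt_cos θ).const_mul s) (by fun_prop)
    (hf.mul ((continuous_rpow_const (by positivity)).comp (by fun_prop)))
  simp only [cos_zero, mul_one, cos_pi_div_two, mul_zero, Function.comp_apply] at hsubst
  have hpointwise : EqOn
      (fun θ => f (s * cos θ) * (s ^ 2 - (s * cos θ) ^ 2) ^ ((m : ℝ) / 2) * -(s * sin θ))
      (fun θ => -(s ^ (m + 1) * (f (s * cos θ) * sin θ ^ (m + 1)))) (uIcc 0 (π / 2)) := by
    intro θ hθ
    rw [uIcc_of_le (by positivity)] at hθ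
    have hsin : 0 ≤ sin θ := sin_nonneg_of_nonneg_of_le_pi hθ.1 (by linarith [hθ.2, pi_pos])
    have hsq : s ^ 2 - (s * cos θ) ^ 2 = (s * sin θ) ^ 2 := by
      linear_combination -s ^ 2 * sin_sq_add_cos_sq θ
    simp only [hsq, sq_rpow_natCast_div_two (mul_nonneg hs hsin)]
    ring
  rw [integral_congr hpointwise, integral_neg, integral_const_mul, integral_symm 0 s,
    neg_inj] at hsubst
  exact hsubst

lemma monotoneOn_integral_mul_sq_sub_sq_rpow {f : ℝ → ℝ} (hf : Continuous f)
    (hf_nonneg : ∀ u, 0 ≤ u → 0 ≤ f u) {p : ℝ} (hp : 0 ≤ p) :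
    MonotoneOn (fun s => ∫ u in (0 : ℝ)..s, f u * (s ^ 2 - u ^ 2) ^ p) (Ici 0) := by
  intro a ha b _ hab
  have hint : ∀ c,
      IntervalIntegrable (fun u => f u * (c ^ 2 - u ^ 2) ^ p) MeasureTheory.volume 0 c :=
    fun c => (hf.mul ((continuous_rpow_const hp).comp (by fun_prop))).intervalIntegrable _ _
  calc ∫ u in (0 : ℝ)..a, f u * (a ^ 2 - u ^ 2) ^ p
      ≤ ∫ u in (0 : ℝ)..a, f u * (b ^ 2 - u ^ 2) ^ p := by
        refine integral_mono_on ha (hint a) ((hint b).mono_set ?_) fun u hu => ?_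
        · exact uIcc_subset_uIcc_left (by rw [uIcc_of_le (ha.trans hab)]; exact ⟨ha, hab⟩)
        · have hua : u ^ 2 ≤ a ^ 2 := pow_le_pow_left₀ hu.1 hu.2 2
          have hab2 : a ^ 2 ≤ b ^ 2 := pow_le_pow_left₀ ha hab 2
          gcongr
          exact hf_nonneg u hu.1
    _ ≤ ∫ u in (0 : ℝ)..b, f u * (b ^ 2 - u ^ 2) ^ p := by
        refine integral_mono_interval le_rfl ha hab ?_ (hint b)
        filter_upwards [MeasureTheory.ae_restrict_mem measurableSet_Ioc] with u hu
        have hub : u ^ 2 ≤ b ^ 2 := pow_le_pow_left₀ hu.1.le hu.2 2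
        exact mul_nonneg (hf_nonneg u hu.1.le) (rpow_nonneg (by linarith) p)

/-- Monotonicity of the weighted Struve-type functions: for `k ≥ 1`,
`s ↦ s^{−k} M_k(s) = ∫₀^{π/2} e^{−s cos θ} sin^{2k} θ dθ` is decreasing on `(0,∞)` and
`s ↦ s^{k} M_k(s) = s^{2k} ∫₀^{π/2} e^{−s cos θ} sin^{2k} θ dθ` is increasing on `(0,∞)`. -/
theorem struve_monotone (k : ℕ) (hk : 1 ≤ k) :
    AntitoneOn (fun s : ℝ => ∫ θ in (0 : ℝ)..(Real.pi / 2),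
        Real.exp (-s * Real.cos θ) * Real.sin θ ^ (2 * k)) (Set.Ioi 0)
    ∧ MonotoneOn (fun s : ℝ => s ^ (2 * k) * ∫ θ in (0 : ℝ)..(Real.pi / 2),
        Real.exp (-s * Real.cos θ) * Real.sin θ ^ (2 * k)) (Set.Ioi 0) := by
  refine ⟨(antitone_integral_exp_neg_mul_cos_mul_sin_pow (2 * k)).antitoneOn _, ?_⟩
  obtain ⟨m, hm⟩ : ∃ m, 2 * k = m + 1 := ⟨2 * k - 1, by omega⟩
  have hsubst : EqOn (fun s => ∫ u in (0 : ℝ)..s, exp (-u) * (s ^ 2 - u ^ 2) ^ ((m : ℝ) / 2))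
      (fun s : ℝ => s ^ (2 * k) * ∫ θ in (0 : ℝ)..(π / 2), exp (-s * cos θ) * sin θ ^ (2 * k))
      (Ioi 0) := fun s hs => by
    simpa only [hm, neg_mul] using
      (pow_succ_mul_integral_comp_mul_cos_mul_sin_pow (f := fun u => exp (-u)) (by fun_prop) m
        (le_of_lt hs)).symm
  exact ((monotoneOn_integral_mul_sq_sub_sq_rpow (by fun_prop) (fun u _ => (exp_pos _).le)
    (by positivity)).mono Ioi_subset_Ici_self).congr hsubst
end

section
/- Green's function first-moment identity: for k ∈ ℕ₀, ξ ≠ 0 and 0 < ρ < 1, with G_k(r,ρ) = −I_k(|ξ|min(r,ρ)) (K_k(|ξ|max(r,ρ)) − (K_k(|ξ|)/I_k(|ξ|)) I_k(|ξ|max(r,ρ))), one has ρ^{−k} ∫₀¹ |G_k(r,ρ)| r^{1+k} dr = (1/|ξ|²)(1 − ρ^{−k} I_k(|ξ|ρ)/I_k(|ξ|)), and in particular |ξ|² ρ^{−k} ∫₀¹ |G_k(r,ρ)| r^{1+k} dr ≤ 1. -/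
/-- The (real-valued) Bessel operator `D_κ f (r) = f'(r) + (κ/r) f(r)`. -/
noncomputable def besselDR (κ : ℝ) (f : ℝ → ℝ) : ℝ → ℝ :=
  fun r => deriv f r + (κ / r) * f r

/-- The Green's function `G_k(r,ρ)` for `D_{1−k}D_k − ξ²` on `(0,1)` with Dirichlet
condition at `r = 1`, built from modified Bessel functions `I`, `K`. -/
noncomputable def greenFun (I K : ℤ → ℝ → ℝ) (k : ℤ) (ξ ρ r : ℝ) : ℝ :=
  -(I k (|ξ| * min r ρ)) *
    (K k (|ξ| * max r ρ) - K k |ξ| / I k |ξ| * I k (|ξ| * max r ρ))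

/-!
Write `s = |ξ|` and `K̃ = K_k − (K_k(s)/I_k(s)) I_k`. Since `I_k` increases, `K_k` decreases
and `K̃(s) = 0`, we have `K̃ ≥ 0` on `(0, s]`, so `|G_k(r,ρ)|` is `K̃(sρ) I_k(sr)` for `r ≤ ρ`
and `I_k(sρ) K̃(sr)` for `r ≥ ρ`. Because `(r^{k+1} f(sr))' = s r^{k+1} (D_{k+1} f)(sr)`, the
recurrences give the antiderivatives `r^{k+1} I_{k+1}(sr)/s` and `−r^{k+1} K̃_{k+1}(sr)/s` of the
two pieces. The boundary terms at `ρ` combine, by the Wronskian identity, into `ρ^k/s²`; the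
term at `1` is `I_k(sρ)/(s² I_k(s))` by the Wronskian at `s`, where `K̃(s) = 0`; the term at `0`
vanishes because the increasing function `I_{k+1}` is bounded near `0`.
-/

open Set Filter Topology MeasureTheory intervalIntegral
open scoped Interval

lemma besselDR_add_besselDR_neg (κ : ℝ) (f : ℝ → ℝ) (x : ℝ) :
    besselDR κ f x + besselDR (-κ) f x = 2 * deriv f x := by
  simp only [besselDR, neg_div]
  ring

lemma besselDR_add_const_mul {f g : ℝ → ℝ} {x : ℝ} (κ c : ℝ) (hf : DifferentiableAt ℝ f x)
    (hg : DifferentiableAt ℝ g x) :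
    besselDR κ (fun y => f y + c * g y) x = besselDR κ f x + c * besselDR κ g x := by
  have hderiv : deriv (fun y => f y + c * g y) x = deriv f x + c * deriv g x :=
    (hf.hasDerivAt.add (hg.hasDerivAt.const_mul c)).deriv
  simp only [besselDR, hderiv]
  ring

lemma hasDerivAt_pow_mul_comp_mul {f : ℝ → ℝ} {s r : ℝ} (n : ℕ) (hs : s ≠ 0) (hr : r ≠ 0)
    (hf : DifferentiableAt ℝ f (s * r)) :
    HasDerivAt (fun r => r ^ n * f (s * r)) (s * (r ^ n * besselDR n f (s * r))) r := by
  have hinner : HasDerivAt (fun r => f (s * r)) (deriv f (s * r) * s) r :=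
    hf.hasDerivAt.comp r ((hasDerivAt_id r).const_mul s |>.congr_deriv (mul_one s))
  refine ((hasDerivAt_pow n r).mul hinner).congr_deriv ?_
  rcases n with _ | n
  · simp [besselDR]; ring
  · simp only [besselDR, pow_succ, Nat.add_sub_cancel]
    push_cast
    field_simp
    ring

lemma monotoneOn_of_besselDR_nonneg {f : ℝ → ℝ} {κ : ℝ} (hf : DifferentiableOn ℝ f (Ioi 0))
    (h₁ : ∀ x > 0, 0 ≤ besselDR κ f x) (h₂ : ∀ x > 0, 0 ≤ besselDR (-κ) f x) :
    MonotoneOn f (Ioi 0) := by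
  refine monotoneOn_of_deriv_nonneg (convex_Ioi 0) hf.continuousOn
    (hf.mono interior_subset) fun x hx => ?_
  rw [interior_Ioi] at hx
  linarith [besselDR_add_besselDR_neg κ f x, h₁ x hx, h₂ x hx]

lemma antitoneOn_of_besselDR_nonpos {f : ℝ → ℝ} {κ : ℝ} (hκ : 0 ≤ κ)
    (hf : DifferentiableOn ℝ f (Ioi 0)) (hpos : ∀ x > 0, 0 ≤ f x)
    (hD : ∀ x > 0, besselDR κ f x ≤ 0) : AntitoneOn f (Ioi 0) := by
  refine antitoneOn_of_deriv_nonpos (convex_Ioi 0) hf.continuousOn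
    (hf.mono interior_subset) fun x hx => ?_
  rw [interior_Ioi] at hx
  have hterm : 0 ≤ κ / x * f x := mul_nonneg (div_nonneg hκ hx.le) (hpos x hx)
  linarith [hD x hx, show besselDR κ f x = deriv f x + κ / x * f x from rfl]

theorem intervalIntegrable_deriv_of_nonneg_of_tendsto {f f' : ℝ → ℝ} {a b fa fb : ℝ}
    (hab : a < b) (hderiv : ∀ x ∈ Ioo a b, HasDerivAt f (f' x) x)
    (hpos : ∀ x ∈ Ioo a b, 0 ≤ f' x) (ha : Tendsto f (𝓝[>] a) (𝓝 fa))
    (hb : Tendsto f (𝓝[<] b) (𝓝 fb)) : IntervalIntegrable f' volume a b := by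
  set F : ℝ → ℝ := Function.update (Function.update f a fa) b fb
  have hF : EqOn F f (Ioo a b) := fun x hx => by
    simp only [F, Function.update_of_ne hx.2.ne, Function.update_of_ne hx.1.ne']
  have hcont : ContinuousOn F (Icc a b) := by
    rw [continuousOn_update_iff, continuousOn_update_iff, Icc_sdiff_right, Ico_sdiff_left]
    refine ⟨⟨fun z hz => (hderiv z hz).continuousAt.continuousWithinAt, fun _ =>
      ha.mono_left (nhdsWithin_mono _ Ioo_subset_Ioi_self)⟩, fun _ => ?_⟩
    refine (hb.congr' ?_).mono_left (nhdsWithin_mono _ Ico_subset_Iio_self)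
    filter_upwards [Ioo_mem_nhdsLT hab] with z hz
    exact (Function.update_of_ne hz.1.ne' _ _).symm
  refine intervalIntegrable_deriv_of_nonneg (g := F) (by rwa [uIcc_of_le hab.le]) ?_ ?_
  · simp only [min_eq_left hab.le, max_eq_right hab.le]
    exact fun x hx => (hderiv x hx).congr_of_eventuallyEq
      (eventuallyEq_of_mem (Ioo_mem_nhds hx.1 hx.2) hF)
  · simpa only [min_eq_left hab.le, max_eq_right hab.le] using hpos

lemma tendsto_pow_mul_comp_mul_nhdsGT_zero {f : ℝ → ℝ} {s : ℝ} {n : ℕ} (hn : n ≠ 0) (hs : 0 < s)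
    (hf : MonotoneOn f (Ioi 0)) (hf0 : ∀ x > 0, 0 ≤ f x) :
    Tendsto (fun r => r ^ n * f (s * r)) (𝓝[>] 0) (𝓝 0) := by
  have hpow : Tendsto (fun r : ℝ => r ^ n) (𝓝[>] 0) (𝓝 0) :=
    ((continuous_pow n).tendsto' 0 0 (zero_pow hn)).mono_left nhdsWithin_le_nhds
  refine hpow.zero_mul_isBoundedUnder_le (isBoundedUnder_of_eventually_le (a := f s) ?_)
  filter_upwards [Ioo_mem_nhdsGT one_pos] with r hr
  have hsr : 0 < s * r := mul_pos hs hr.1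
  rw [Function.comp_apply, Real.norm_of_nonneg (hf0 _ hsr)]
  exact hf hsr hs (mul_lt_of_lt_one_right hs hr.2).le

lemma hasDerivAt_pow_mul_comp_mul_div_of_besselDR {f g : ℝ → ℝ} {s x : ℝ} (n : ℕ) (hs : 0 < s)
    (hx : 0 < x) (hf : DifferentiableOn ℝ f (Ioi 0)) (hfg : ∀ y > 0, besselDR n f y = g y) :
    HasDerivAt (fun r => r ^ n * f (s * r) / s) (g (s * x) * x ^ n) x := by
  have hsx : 0 < s * x := mul_pos hs hx
  refine ((hasDerivAt_pow_mul_comp_mul n hs.ne' hx.ne'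
    (hf.differentiableAt (Ioi_mem_nhds hsx))).div_const s).congr_deriv ?_
  rw [hfg _ hsx]
  field_simp

lemma integral_pow_mul_comp_mul_of_besselDR {f g : ℝ → ℝ} {s a b : ℝ} (n : ℕ) (hs : 0 < s)
    (ha : 0 < a) (hb : 0 < b) (hf : DifferentiableOn ℝ f (Ioi 0))
    (hfg : ∀ x > 0, besselDR n f x = g x) (hg : ContinuousOn g (Ioi 0)) :
    ∫ r in a..b, g (s * r) * r ^ n = (b ^ n * f (s * b) - a ^ n * f (s * a)) / s := by
  have hpos : ∀ x ∈ uIcc a b, 0 < x := fun x hx => (lt_min ha hb).trans_le hx.1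
  have hint : IntervalIntegrable (fun r => g (s * r) * r ^ n) volume a b := by
    refine ContinuousOn.intervalIntegrable (ContinuousOn.mul ?_ (continuous_pow n).continuousOn)
    exact hg.comp (continuous_const.mul continuous_id).continuousOn
      fun x hx => mul_pos hs (hpos x hx)
  rw [integral_eq_sub_of_hasDerivAt
    (fun x hx => hasDerivAt_pow_mul_comp_mul_div_of_besselDR n hs (hpos x hx) hf hfg) hint]
  ring

lemma integral_zero_pow_mul_comp_mul_of_besselDR {f g : ℝ → ℝ} {s ρ : ℝ} {n : ℕ} (hn : n ≠ 0)
    (hs : 0 < s) (hρ : 0 < ρ) (hf : DifferentiableOn ℝ f (Ioi 0))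
    (hfg : ∀ x > 0, besselDR n f x = g x) (hg : ∀ x > 0, 0 ≤ g x)
    (hmono : MonotoneOn f (Ioi 0)) (hf0 : ∀ x > 0, 0 ≤ f x) :
    IntervalIntegrable (fun r => g (s * r) * r ^ n) volume 0 ρ ∧
      ∫ r in (0 : ℝ)..ρ, g (s * r) * r ^ n = ρ ^ n * f (s * ρ) / s := by
  have hderiv : ∀ x ∈ Ioo 0 ρ, HasDerivAt (fun r => r ^ n * f (s * r) / s) (g (s * x) * x ^ n) x :=
    fun x hx => hasDerivAt_pow_mul_comp_mul_div_of_besselDR n hs hx.1 hf hfg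
  have hnonneg : ∀ x ∈ Ioo 0 ρ, 0 ≤ g (s * x) * x ^ n :=
    fun x hx => mul_nonneg (hg _ (mul_pos hs hx.1)) (pow_nonneg hx.1.le n)
  have hzero : Tendsto (fun r => r ^ n * f (s * r) / s) (𝓝[>] 0) (𝓝 0) := by
    simpa using (tendsto_pow_mul_comp_mul_nhdsGT_zero hn hs hmono hf0).div_const s
  have hρlim : Tendsto (fun r => r ^ n * f (s * r) / s) (𝓝[<] ρ) (𝓝 (ρ ^ n * f (s * ρ) / s)) :=
    (hasDerivAt_pow_mul_comp_mul_div_of_besselDR n hs hρ hf hfg).continuousAt.continuousWithinAt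
  have hint := intervalIntegrable_deriv_of_nonneg_of_tendsto hρ hderiv hnonneg hzero hρlim
  refine ⟨hint, ?_⟩
  rw [integral_eq_sub_of_hasDerivAt_of_tendsto hρ hderiv hint hzero hρlim, sub_zero]

/-- The paper's `K̃_ℓ = K_ℓ − (−1)^(k−ℓ) (K_k(|ξ|)/I_k(|ξ|)) I_ℓ`. The sign is chosen so that
`D_ℓ K̃_ℓ = −K̃_{ℓ−1}` and the Wronskian identity survive, while `K̃_k` vanishes at `|ξ|`. -/
noncomputable def besselKTilde (I K : ℤ → ℝ → ℝ) (k ℓ : ℤ) (ξ x : ℝ) : ℝ :=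
  K ℓ x - (-1 : ℝ) ^ (k - ℓ) * (K k |ξ| / I k |ξ|) * I ℓ x

section besselKTilde

variable {I K : ℤ → ℝ → ℝ} {k ℓ : ℤ} {ξ x : ℝ}

lemma greenFun_eq_mul_besselKTilde (ρ r : ℝ) :
    greenFun I K k ξ ρ r = -I k (|ξ| * min r ρ) * besselKTilde I K k k ξ (|ξ| * max r ρ) := by
  simp [greenFun, besselKTilde]

lemma besselKTilde_self (h : I k |ξ| ≠ 0) : besselKTilde I K k k ξ |ξ| = 0 := by
  simp [besselKTilde, h]

lemma besselKTilde_nonneg (hK : AntitoneOn (K k) (Ioi 0)) (hI : MonotoneOn (I k) (Ioi 0))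
    (hc : 0 ≤ K k |ξ| / I k |ξ|) (hIξ : I k |ξ| ≠ 0) (hx : 0 < x) (hxξ : x ≤ |ξ|) :
    0 ≤ besselKTilde I K k k ξ x := by
  have hs : |ξ| ∈ Ioi (0 : ℝ) := hx.trans_le hxξ
  rw [← besselKTilde_self (K := K) hIξ]
  simp only [besselKTilde, sub_self, zpow_zero, one_mul]
  nlinarith [hK hx hs hxξ, hI hx hs hxξ]

lemma differentiableOn_besselKTilde {s : Set ℝ} (hK : DifferentiableOn ℝ (K ℓ) s)
    (hI : DifferentiableOn ℝ (I ℓ) s) : DifferentiableOn ℝ (besselKTilde I K k ℓ ξ) s :=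
  hK.sub (hI.const_mul _)

lemma besselKTilde_sub_one (ℓ : ℤ) :
    besselKTilde I K k (ℓ - 1) ξ x =
      K (ℓ - 1) x + (-1 : ℝ) ^ (k - ℓ) * (K k |ξ| / I k |ξ|) * I (ℓ - 1) x := by
  rw [besselKTilde, show k - (ℓ - 1) = k - ℓ + 1 by ring, zpow_add_one₀ (by norm_num)]
  ring

lemma besselDR_besselKTilde (hK : DifferentiableAt ℝ (K ℓ) x) (hI : DifferentiableAt ℝ (I ℓ) x)
    (hKrec : besselDR ℓ (K ℓ) x = -K (ℓ - 1) x) (hIrec : besselDR ℓ (I ℓ) x = I (ℓ - 1) x) :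
    besselDR ℓ (besselKTilde I K k ℓ ξ) x = -besselKTilde I K k (ℓ - 1) ξ x := by
  have hfun : besselKTilde I K k ℓ ξ =
      fun y => K ℓ y + -((-1 : ℝ) ^ (k - ℓ) * (K k |ξ| / I k |ξ|)) * I ℓ y := by
    funext y
    simp only [besselKTilde]
    ring
  rw [hfun, besselDR_add_const_mul _ _ hK hI, hKrec, hIrec, besselKTilde_sub_one]
  ring

lemma besselKTilde_wronskian (hW : x * (K ℓ x * I (ℓ - 1) x + I ℓ x * K (ℓ - 1) x) = 1) :
    x * (besselKTilde I K k ℓ ξ x * I (ℓ - 1) x + I ℓ x * besselKTilde I K k (ℓ - 1) ξ x) = 1 := by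
  rw [besselKTilde_sub_one, besselKTilde]
  linear_combination hW

end besselKTilde

lemma integral_abs_greenFun_mul_pow_eq_add {I K : ℤ → ℝ → ℝ} {k : ℤ} {ξ ρ : ℝ} (n : ℕ)
    (hξ : ξ ≠ 0) (hρ0 : 0 < ρ) (hρ1 : ρ < 1) (hI : ∀ x > 0, 0 ≤ I k x)
    (hKt : ∀ x, 0 < x → x ≤ |ξ| → 0 ≤ besselKTilde I K k k ξ x)
    (hintI : IntervalIntegrable (fun r => I k (|ξ| * r) * r ^ n) volume 0 ρ)
    (hintK : IntervalIntegrable (fun r => besselKTilde I K k k ξ (|ξ| * r) * r ^ n)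
      volume ρ 1) :
    ∫ r in (0 : ℝ)..1, |greenFun I K k ξ ρ r| * r ^ n =
      besselKTilde I K k k ξ (|ξ| * ρ) * (∫ r in (0 : ℝ)..ρ, I k (|ξ| * r) * r ^ n) +
        I k (|ξ| * ρ) * ∫ r in ρ..1, besselKTilde I K k k ξ (|ξ| * r) * r ^ n := by
  have hs : 0 < |ξ| := abs_pos.2 hξ
  have heqI : EqOn (fun r => |greenFun I K k ξ ρ r| * r ^ n)
      (fun r => besselKTilde I K k k ξ (|ξ| * ρ) * (I k (|ξ| * r) * r ^ n)) (Ι 0 ρ) := by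
    intro r hr
    rw [uIoc_of_le hρ0.le] at hr
    simp only [greenFun_eq_mul_besselKTilde, min_eq_left hr.2, max_eq_right hr.2, abs_mul,
      abs_neg, abs_of_nonneg (hI _ (mul_pos hs hr.1)),
      abs_of_nonneg (hKt _ (mul_pos hs hρ0) (mul_le_of_le_one_right hs.le hρ1.le))]
    ring
  have heqK : EqOn (fun r => |greenFun I K k ξ ρ r| * r ^ n)
      (fun r => I k (|ξ| * ρ) * (besselKTilde I K k k ξ (|ξ| * r) * r ^ n)) (Ι ρ 1) := by
    intro r hr
    rw [uIoc_of_le hρ1.le] at hr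
    have hr0 : 0 < r := hρ0.trans hr.1
    simp only [greenFun_eq_mul_besselKTilde, min_eq_right hr.1.le, max_eq_left hr.1.le, abs_mul,
      abs_neg, abs_of_nonneg (hI _ (mul_pos hs hρ0)),
      abs_of_nonneg (hKt _ (mul_pos hs hr0) (mul_le_of_le_one_right hs.le hr.2))]
    ring
  rw [← integral_add_adjacent_intervals ((intervalIntegrable_congr heqI).2 (hintI.const_mul _))
    ((intervalIntegrable_congr heqK).2 (hintK.const_mul _)),
    integral_congr_ae (Filter.Eventually.of_forall heqI),
    integral_congr_ae (Filter.Eventually.of_forall heqK),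
    intervalIntegral.integral_const_mul, intervalIntegral.integral_const_mul]

section BesselFamily

variable {I K : ℤ → ℝ → ℝ}

lemma monotoneOn_besselI (hIdiff : ∀ m : ℤ, DifferentiableOn ℝ (I m) (Ioi 0))
    (hIrec : ∀ m : ℤ, ∀ s > (0 : ℝ), besselDR (m : ℝ) (I m) s = I (m - 1) s)
    (hIrec' : ∀ m : ℤ, ∀ s > (0 : ℝ), besselDR (-(m : ℝ)) (I m) s = I (m + 1) s)
    (hIpos : ∀ m : ℤ, ∀ s > (0 : ℝ), 0 < I m s) (m : ℤ) : MonotoneOn (I m) (Ioi 0) :=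
  monotoneOn_of_besselDR_nonneg (hIdiff m) (fun x hx => hIrec m x hx ▸ (hIpos _ x hx).le)
    (fun x hx => hIrec' m x hx ▸ (hIpos _ x hx).le)

lemma besselKTilde_nonneg_of_le (hIdiff : ∀ m : ℤ, DifferentiableOn ℝ (I m) (Ioi 0))
    (hKdiff : ∀ m : ℤ, DifferentiableOn ℝ (K m) (Ioi 0))
    (hIrec : ∀ m : ℤ, ∀ s > (0 : ℝ), besselDR (m : ℝ) (I m) s = I (m - 1) s)
    (hIrec' : ∀ m : ℤ, ∀ s > (0 : ℝ), besselDR (-(m : ℝ)) (I m) s = I (m + 1) s)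
    (hKrec : ∀ m : ℤ, ∀ s > (0 : ℝ), besselDR (m : ℝ) (K m) s = -K (m - 1) s)
    (hIpos : ∀ m : ℤ, ∀ s > (0 : ℝ), 0 < I m s) (hKpos : ∀ m : ℤ, ∀ s > (0 : ℝ), 0 < K m s)
    (k : ℕ) {ξ x : ℝ} (hx : 0 < x) (hxξ : x ≤ |ξ|) : 0 ≤ besselKTilde I K k k ξ x := by
  have hs : 0 < |ξ| := hx.trans_le hxξ
  have hKanti : AntitoneOn (K k) (Ioi 0) :=
    antitoneOn_of_besselDR_nonpos (κ := (k : ℤ)) (by positivity) (hKdiff k)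
      (fun x hx => (hKpos k x hx).le) fun x hx => by
        rw [hKrec k x hx]
        linarith [hKpos (k - 1) x hx]
  exact besselKTilde_nonneg hKanti (monotoneOn_besselI hIdiff hIrec hIrec' hIpos k)
    (div_pos (hKpos k _ hs) (hIpos k _ hs)).le (hIpos k _ hs).ne' hx hxξ

lemma integral_besselI_mul_pow (hIdiff : ∀ m : ℤ, DifferentiableOn ℝ (I m) (Ioi 0))
    (hIrec : ∀ m : ℤ, ∀ s > (0 : ℝ), besselDR (m : ℝ) (I m) s = I (m - 1) s)
    (hIrec' : ∀ m : ℤ, ∀ s > (0 : ℝ), besselDR (-(m : ℝ)) (I m) s = I (m + 1) s)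
    (hIpos : ∀ m : ℤ, ∀ s > (0 : ℝ), 0 < I m s) (k : ℕ) {s ρ : ℝ} (hs : 0 < s) (hρ : 0 < ρ) :
    IntervalIntegrable (fun r => I k (s * r) * r ^ (1 + k)) volume 0 ρ ∧
      ∫ r in (0 : ℝ)..ρ, I k (s * r) * r ^ (1 + k) = ρ ^ (1 + k) * I (k + 1) (s * ρ) / s := by
  refine integral_zero_pow_mul_comp_mul_of_besselDR (by omega) hs hρ (hIdiff _) (fun x hx => ?_)
    (fun x hx => (hIpos k x hx).le) (monotoneOn_besselI hIdiff hIrec hIrec' hIpos _)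
    (fun x hx => (hIpos _ x hx).le)
  rw [show (((1 + k : ℕ)) : ℝ) = (((k + 1 : ℤ)) : ℝ) by push_cast; ring, hIrec _ x hx,
    add_sub_cancel_right]

lemma integral_besselKTilde_mul_pow (hIdiff : ∀ m : ℤ, DifferentiableOn ℝ (I m) (Ioi 0))
    (hKdiff : ∀ m : ℤ, DifferentiableOn ℝ (K m) (Ioi 0))
    (hIrec : ∀ m : ℤ, ∀ s > (0 : ℝ), besselDR (m : ℝ) (I m) s = I (m - 1) s)
    (hKrec : ∀ m : ℤ, ∀ s > (0 : ℝ), besselDR (m : ℝ) (K m) s = -K (m - 1) s)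
    (k : ℕ) {ξ s a b : ℝ} (hs : 0 < s) (ha : 0 < a) (hb : 0 < b) :
    ∫ r in a..b, besselKTilde I K k k ξ (s * r) * r ^ (1 + k) =
      (a ^ (1 + k) * besselKTilde I K k (k + 1) ξ (s * a) -
        b ^ (1 + k) * besselKTilde I K k (k + 1) ξ (s * b)) / s := by
  have hrec : ∀ x > 0, besselDR ((1 + k : ℕ) : ℝ) (besselKTilde I K k (k + 1) ξ) x =
      -besselKTilde I K k k ξ x := fun x hx => by
    rw [show (((1 + k : ℕ)) : ℝ) = (((k + 1 : ℤ)) : ℝ) by push_cast; ring,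
      besselDR_besselKTilde ((hKdiff _).differentiableAt (Ioi_mem_nhds hx))
        ((hIdiff _).differentiableAt (Ioi_mem_nhds hx)) (hKrec _ x hx) (hIrec _ x hx),
      add_sub_cancel_right]
  have h := integral_pow_mul_comp_mul_of_besselDR (1 + k) hs ha hb
    (differentiableOn_besselKTilde (hKdiff _) (hIdiff _)) hrec
    (differentiableOn_besselKTilde (hKdiff k) (hIdiff k)).continuousOn.neg
  simp only [neg_mul, intervalIntegral.integral_neg] at h
  linear_combination -h

lemma integral_abs_greenFun_mul_pow (hIdiff : ∀ m : ℤ, DifferentiableOn ℝ (I m) (Ioi 0))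
    (hKdiff : ∀ m : ℤ, DifferentiableOn ℝ (K m) (Ioi 0))
    (hIrec : ∀ m : ℤ, ∀ s > (0 : ℝ), besselDR (m : ℝ) (I m) s = I (m - 1) s)
    (hIrec' : ∀ m : ℤ, ∀ s > (0 : ℝ), besselDR (-(m : ℝ)) (I m) s = I (m + 1) s)
    (hKrec : ∀ m : ℤ, ∀ s > (0 : ℝ), besselDR (m : ℝ) (K m) s = -K (m - 1) s)
    (hWron : ∀ m : ℤ, ∀ s > (0 : ℝ), s * (K m s * I (m - 1) s + I m s * K (m - 1) s) = 1)
    (hIpos : ∀ m : ℤ, ∀ s > (0 : ℝ), 0 < I m s) (hKpos : ∀ m : ℤ, ∀ s > (0 : ℝ), 0 < K m s)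
    (k : ℕ) {ξ ρ : ℝ} (hξ : ξ ≠ 0) (hρ0 : 0 < ρ) (hρ1 : ρ < 1) :
    ∫ r in (0 : ℝ)..1, |greenFun I K k ξ ρ r| * r ^ (1 + k) =
      (ρ ^ k - I k (|ξ| * ρ) / I k |ξ|) / ξ ^ 2 := by
  have hs : 0 < |ξ| := abs_pos.2 hξ
  have hIξ : I k |ξ| ≠ 0 := (hIpos k _ hs).ne'
  obtain ⟨hintI, hvalI⟩ := integral_besselI_mul_pow hIdiff hIrec hIrec' hIpos k hs hρ0
  have hintK : IntervalIntegrable (fun r => besselKTilde I K k k ξ (|ξ| * r) * r ^ (1 + k))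
      volume ρ 1 := by
    refine ContinuousOn.intervalIntegrable (ContinuousOn.mul ?_ (continuous_pow _).continuousOn)
    refine (differentiableOn_besselKTilde (hKdiff _) (hIdiff _)).continuousOn.comp
      (continuous_const.mul continuous_id).continuousOn fun x hx => mul_pos hs ?_
    rw [uIcc_of_le hρ1.le] at hx
    exact hρ0.trans_le hx.1
  have hWρ := besselKTilde_wronskian (k := k) (ξ := ξ) (hWron (k + 1) _ (mul_pos hs hρ0))
  have hWξ := besselKTilde_wronskian (k := k) (ξ := ξ) (hWron (k + 1) _ hs)
  rw [add_sub_cancel_right] at hWρ hWξ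
  rw [besselKTilde_self hIξ] at hWξ
  rw [integral_abs_greenFun_mul_pow_eq_add (1 + k) hξ hρ0 hρ1 (fun x hx => (hIpos k x hx).le)
    (fun x hx hxξ => besselKTilde_nonneg_of_le hIdiff hKdiff hIrec hIrec' hKrec hIpos hKpos k hx
      hxξ) hintI hintK, hvalI, integral_besselKTilde_mul_pow hIdiff hKdiff hIrec hKrec k hs hρ0
    one_pos, mul_one, one_pow, one_mul, ← sq_abs ξ]
  field_simp
  linear_combination ρ ^ k * I k |ξ| * hWρ - I k (|ξ| * ρ) * hWξ

end BesselFamily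

theorem green_first_moment_general (I K : ℤ → ℝ → ℝ)
    (hIdiff : ∀ m : ℤ, DifferentiableOn ℝ (I m) (Set.Ioi 0))
    (hKdiff : ∀ m : ℤ, DifferentiableOn ℝ (K m) (Set.Ioi 0))
    (hIrec : ∀ m : ℤ, ∀ s > (0 : ℝ), besselDR (m : ℝ) (I m) s = I (m - 1) s)
    (hIrec' : ∀ m : ℤ, ∀ s > (0 : ℝ), besselDR (-(m : ℝ)) (I m) s = I (m + 1) s)
    (hKrec : ∀ m : ℤ, ∀ s > (0 : ℝ), besselDR (m : ℝ) (K m) s = -K (m - 1) s)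
    (hWron : ∀ m : ℤ, ∀ s > (0 : ℝ), s * (K m s * I (m - 1) s + I m s * K (m - 1) s) = 1)
    (hIpos : ∀ m : ℤ, ∀ s > (0 : ℝ), 0 < I m s)
    (hKpos : ∀ m : ℤ, ∀ s > (0 : ℝ), 0 < K m s)
    (k : ℕ) (ξ : ℝ) (hξ : ξ ≠ 0) (ρ : ℝ) (hρ0 : 0 < ρ) (hρ1 : ρ < 1) :
    ρ ^ (-(k : ℤ)) * ∫ r in (0 : ℝ)..1, |greenFun I K k ξ ρ r| * r ^ (1 + k)
        = (1 / ξ ^ 2) * (1 - ρ ^ (-(k : ℤ)) * I k (|ξ| * ρ) / I k |ξ|)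
      ∧ ξ ^ 2 * (ρ ^ (-(k : ℤ)) * ∫ r in (0 : ℝ)..1, |greenFun I K k ξ ρ r| * r ^ (1 + k))
          ≤ 1 := by
  have hmoment := integral_abs_greenFun_mul_pow hIdiff hKdiff hIrec hIrec' hKrec hWron hIpos hKpos
    k hξ hρ0 hρ1
  have hfirst : ρ ^ (-(k : ℤ)) * ∫ r in (0 : ℝ)..1, |greenFun I K k ξ ρ r| * r ^ (1 + k)
      = (1 / ξ ^ 2) * (1 - ρ ^ (-(k : ℤ)) * I k (|ξ| * ρ) / I k |ξ|) := by
    rw [hmoment, zpow_neg, zpow_natCast]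
    field_simp
  have hratio : 0 ≤ ρ ^ (-(k : ℤ)) * I k (|ξ| * ρ) / I k |ξ| := by
    have hIρ := hIpos k _ (mul_pos (abs_pos.2 hξ) hρ0)
    have hIξ := hIpos k _ (abs_pos.2 hξ)
    positivity
  refine ⟨hfirst, ?_⟩
  rw [hfirst, ← mul_assoc, mul_one_div_cancel (pow_ne_zero 2 hξ), one_mul]
  linarith

/-- First-moment identity for the Green's function: for families `I`, `K` satisfying the
standard modified-Bessel recurrences, the Wronskian identity, and positivity,
`ρ^{−k} ∫₀¹ |G_k(r,ρ)| r^{1+k} dr = (1/ξ²)(1 − ρ^{−k} I_k(|ξ|ρ)/I_k(|ξ|))`, and in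
particular `ξ²` times this quantity is at most `1`. -/
theorem green_first_moment (I K : ℤ → ℝ → ℝ)
    (hIdiff : ∀ m : ℤ, DifferentiableOn ℝ (I m) (Set.Ioi 0))
    (hKdiff : ∀ m : ℤ, DifferentiableOn ℝ (K m) (Set.Ioi 0))
    (hIrec : ∀ m : ℤ, ∀ s > (0 : ℝ), besselDR (m : ℝ) (I m) s = I (m - 1) s)
    (hIrec' : ∀ m : ℤ, ∀ s > (0 : ℝ), besselDR (-(m : ℝ)) (I m) s = I (m + 1) s)
    (hKrec : ∀ m : ℤ, ∀ s > (0 : ℝ), besselDR (m : ℝ) (K m) s = -K (m - 1) s)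
    (hKrec' : ∀ m : ℤ, ∀ s > (0 : ℝ), besselDR (-(m : ℝ)) (K m) s = -K (m + 1) s)
    (hWron : ∀ m : ℤ, ∀ s > (0 : ℝ), s * (K m s * I (m - 1) s + I m s * K (m - 1) s) = 1)
    (hIpos : ∀ m : ℤ, ∀ s > (0 : ℝ), 0 < I m s)
    (hKpos : ∀ m : ℤ, ∀ s > (0 : ℝ), 0 < K m s)
    (k : ℕ) (ξ : ℝ) (hξ : ξ ≠ 0) (ρ : ℝ) (hρ0 : 0 < ρ) (hρ1 : ρ < 1) :
    ρ ^ (-(k : ℤ)) * ∫ r in (0 : ℝ)..1, |greenFun I K k ξ ρ r| * r ^ (1 + k)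
        = (1 / ξ ^ 2) * (1 - ρ ^ (-(k : ℤ)) * I k (|ξ| * ρ) / I k |ξ|)
      ∧ ξ ^ 2 * (ρ ^ (-(k : ℤ)) * ∫ r in (0 : ℝ)..1, |greenFun I K k ξ ρ r| * r ^ (1 + k))
          ≤ 1 :=
  green_first_moment_general I K hIdiff hKdiff hIrec hIrec' hKrec hWron hIpos hKpos k ξ hξ ρ hρ0 hρ1
end
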